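/- arXiv:1906.08575 — 2 statements merged into one kernel-verified Lean document; each statement's English description precedes it below -/
import Mathlib

section
/- Let R = 1, 0 < β < π, and θ ∈ (β/2, π/2) with cos θ - tan(β/2) cos(π/2 - θ) ≥ 0, and 0 < α < π. Then the half longitude-width of the viewport Δ/2 = π/2 - arctan((cos θ - tan(β/2) sin θ)/tan(α/2)) lies in the interval (0, π/2], and Δ/2 is an increasing function of the latitude θ. -/
/-! On `[0, π/2]` the numerator `cos θ - tan (β/2) sin θ` is strictly decreasing, since `cos`
decreases, `sin` increases and `tan (β/2) ≥ 0`. Dividing by `tan (α/2) > 0` and applying the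
increasing `arctan` keeps it decreasing, so `π/2 - arctan (…)` increases; when the numerator is
nonnegative, `arctan` of it lies in `[0, π/2)`. -/

open Real

theorem strictAntiOn_cos_sub_mul_sin {t : ℝ} (ht : 0 ≤ t) :
    StrictAntiOn (fun θ => cos θ - t * sin θ) (Set.Icc 0 (π / 2)) := by
  intro a ⟨ha₀, ha₁⟩ b ⟨hb₀, hb₁⟩ hab
  have hcos : cos b < cos a :=
    strictAntiOn_cos ⟨ha₀, by linarith [pi_pos]⟩ ⟨hb₀, by linarith [pi_pos]⟩ hab
  have hsin : sin a ≤ sin b :=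
    (strictMonoOn_sin ⟨by linarith [pi_pos], ha₁⟩ ⟨by linarith [pi_pos], hb₁⟩ hab).le
  linarith [mul_le_mul_of_nonneg_left hsin ht]

theorem pi_div_two_sub_arctan_mem_Ioc {x : ℝ} (hx : 0 ≤ x) :
    π / 2 - arctan x ∈ Set.Ioc 0 (π / 2) := by
  have hx' : 0 ≤ arctan x := arctan_zero ▸ arctan_strictMono.monotone hx
  constructor <;> linarith [arctan_lt_pi_div_two x]

theorem viewport_halfwidth_range_and_mono_general (α β : ℝ)
    (hα : 0 < α) (hα' : α < π) (hβ : 0 < β)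
    (Δhalf : ℝ → ℝ)
    (hΔ : ∀ θ, Δhalf θ = π / 2 -
      Real.arctan ((Real.cos θ - Real.tan (β / 2) * Real.sin θ) / Real.tan (α / 2))) :
    (∀ θ ∈ Set.Ioo (β / 2) (π / 2),
        0 ≤ Real.cos θ - Real.tan (β / 2) * Real.sin θ →
          Δhalf θ ∈ Set.Ioc 0 (π / 2)) ∧
    StrictMonoOn Δhalf
      {θ | θ ∈ Set.Ioo (β / 2) (π / 2) ∧
        0 ≤ Real.cos θ - Real.tan (β / 2) * Real.sin θ} := by
  have htα : 0 < tan (α / 2) := tan_pos_of_pos_of_lt_pi_div_two (by linarith) (by linarith)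
  refine ⟨fun θ _ hnum => hΔ θ ▸ pi_div_two_sub_arctan_mem_Ioc (div_nonneg hnum htα.le), ?_⟩
  intro a ⟨⟨ha₀, ha₁⟩, _⟩ b ⟨⟨hb₀, hb₁⟩, _⟩ hab
  have htβ : 0 ≤ tan (β / 2) := tan_nonneg_of_nonneg_of_le_pi_div_two (by linarith) (by linarith)
  have hnum := strictAntiOn_cos_sub_mul_sin htβ
    ⟨by linarith, ha₁.le⟩ ⟨by linarith, hb₁.le⟩ hab
  have harctan := arctan_strictMono (div_lt_div_of_pos_right hnum htα)
  rw [hΔ a, hΔ b]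
  linarith

theorem viewport_halfwidth_range_and_mono (α β : ℝ)
    (hα : 0 < α) (hα' : α < π) (hβ : 0 < β) (hβ' : β < π)
    (Δhalf : ℝ → ℝ)
    (hΔ : ∀ θ, Δhalf θ = π / 2 -
      Real.arctan ((Real.cos θ - Real.tan (β / 2) * Real.sin θ) / Real.tan (α / 2))) :
    (∀ θ ∈ Set.Ioo (β / 2) (π / 2),
        0 ≤ Real.cos θ - Real.tan (β / 2) * Real.sin θ →
          Δhalf θ ∈ Set.Ioc 0 (π / 2)) ∧
    StrictMonoOn Δhalf
      {θ | θ ∈ Set.Ioo (β / 2) (π / 2) ∧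
        0 ≤ Real.cos θ - Real.tan (β / 2) * Real.sin θ} :=
  viewport_halfwidth_range_and_mono_general α β hα hα' hβ Δhalf hΔ
end

section
/- Let R = 1, 0 < α, β < π, and θ ∈ (β/2, π/2). Then the southernmost latitude of the viewport, θ' = arctan((sin θ - tan(β/2) cos θ) / sqrt((cos θ + tan(β/2) sin θ)² + tan(α/2)²)), satisfies 0 < θ' < θ. -/
open Real

theorem southernmost_latitude_bounds (α β θ : ℝ)
    (hα : 0 < α) (hα' : α < π) (hβ : 0 < β) (hβ' : β < π)
    (hθ : θ ∈ Set.Ioo (β / 2) (π / 2)) :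
    0 < Real.arctan ((Real.sin θ - Real.tan (β / 2) * Real.cos θ) /
        Real.sqrt ((Real.cos θ + Real.tan (β / 2) * Real.sin θ) ^ 2
          + Real.tan (α / 2) ^ 2)) ∧
    Real.arctan ((Real.sin θ - Real.tan (β / 2) * Real.cos θ) /
        Real.sqrt ((Real.cos θ + Real.tan (β / 2) * Real.sin θ) ^ 2
          + Real.tan (α / 2) ^ 2)) < θ := by
  obtain ⟨h1, h2⟩ := hθ
  have hθ0 : 0 < θ := lt_trans (by linarith) h1
  have hcos : 0 < Real.cos θ := Real.cos_pos_of_mem_Ioo ⟨by linarith [Real.pi_pos], h2⟩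
  have hsin : 0 < Real.sin θ := Real.sin_pos_of_pos_of_lt_pi hθ0 (by linarith [Real.pi_pos])
  have htpos : 0 < Real.tan (β / 2) :=
    Real.tan_pos_of_pos_of_lt_pi_div_two (by linarith) (by linarith)
  have hapos : 0 < Real.tan (α / 2) :=
    Real.tan_pos_of_pos_of_lt_pi_div_two (by linarith) (by linarith)
  have htan : Real.tan (β / 2) < Real.tan θ :=
    Real.tan_lt_tan_of_lt_of_lt_pi_div_two (by linarith) h2 h1
  have htaneq : Real.tan θ = Real.sin θ / Real.cos θ := Real.tan_eq_sin_div_cos θ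
  have hN : 0 < Real.sin θ - Real.tan (β / 2) * Real.cos θ := by
    have := (div_lt_div_iff₀ (by norm_num : (0:ℝ) < 1) hcos).mp
      (by simpa [htaneq] using htan)
    nlinarith
  set S := (Real.cos θ + Real.tan (β / 2) * Real.sin θ) ^ 2 + Real.tan (α / 2) ^ 2 with hS
  have hSpos : 0 < S := by positivity
  have hDgt : Real.cos θ < Real.sqrt S := by
    rw [lt_sqrt hcos.le, hS]
    nlinarith [mul_pos hcos (mul_pos htpos hsin), sq_nonneg (Real.tan (β / 2) * Real.sin θ), sq_nonneg (Real.tan (α / 2)), hapos]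
  have hDpos : 0 < Real.sqrt S := lt_trans hcos hDgt
  constructor
  · have := Real.arctan_strictMono (div_pos hN hDpos)
    simpa using this
  · have key : (Real.sin θ - Real.tan (β / 2) * Real.cos θ) / Real.sqrt S < Real.tan θ := by
      rw [htaneq, div_lt_div_iff₀ hDpos hcos]
      nlinarith [mul_pos htpos hcos, mul_lt_mul_of_pos_left hDgt hsin]
    calc Real.arctan ((Real.sin θ - Real.tan (β / 2) * Real.cos θ) / Real.sqrt S)
        < Real.arctan (Real.tan θ) := Real.arctan_strictMono key
      _ = θ := Real.arctan_tan (by linarith) h2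
end
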